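/- Let α ∈ (0,1) and for θ ∈ [0,2π) set h(θ) := −Log(1−(1−e^{−iθ})^α), so that the critical curve is C_α = {h(θ) : θ ∈ [0,2π)}. Then: the map θ ↦ h(θ) is injective on [0,2π); for every θ ∈ [0,2π), 0 ≤ Re h(θ) ≤ −log(2^α−1); Re h(θ) = 0 if and only if θ = 0, in which case h(θ) = 0; and Re h(θ) = −log(2^α−1) if and only if θ = π, in which case |Im h(θ)| = π. -/

import Mathlib

/-!
Write `t = (π - θ) / 2`. For `0 < θ < 2π` one has `1 - e^{-iθ} = 2 cos t · e^{it}` with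
`|t| < π / 2`, hence `(1 - e^{-iθ})^α = R e^{iαt}` with `R = (2 cos t)^α`, and the squared modulus
of `1 - (1 - e^{-iθ})^α` is `R² - 2 R cos (α t) + 1`. This is even in `t`, and its derivative on
`(0, π / 2)` has the sign of `sin ((1 + α) t) - sin t · (2 cos t)^α`, which is positive by weighted
AM-GM followed by strict concavity of `sin`. So on `(0, 2π)` the modulus lies in `[2^α - 1, 1)`
with its minimum exactly at `θ = π`, which gives the bounds on `Re h = -log |1 - (1 - e^{-iθ})^α|`;
at `θ = 0` everything vanishes. Injectivity holds because `h` is a composition of injective maps;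
for `w ↦ w^α` this uses `α ≤ 1`.
-/

open Real

lemma sin_mul_two_cos_rpow_lt_sin_one_add_mul {α t : ℝ} (hα0 : 0 < α) (hα1 : α < 1)
    (ht0 : 0 < t) (ht : t < π / 2) :
    sin t * (2 * cos t) ^ α < sin ((1 + α) * t) := by
  have hsin : 0 < sin t := sin_pos_of_pos_of_lt_pi ht0 (by linarith [pi_pos])
  have hcos : 0 < cos t := cos_pos_of_mem_Ioo ⟨by linarith, ht⟩
  have hsin2 : sin (2 * t) = sin t * (2 * cos t) := by rw [sin_two_mul]; ring
  calc sin t * (2 * cos t) ^ α = sin t ^ (1 - α) * sin (2 * t) ^ α := by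
        rw [hsin2, mul_rpow hsin.le (by positivity), ← mul_assoc, ← rpow_add hsin]
        norm_num
    _ ≤ (1 - α) * sin t + α * sin (2 * t) :=
        geom_mean_le_arith_mean2_weighted (by linarith) hα0.le hsin.le (by rw [hsin2]; positivity)
          (by ring)
    _ < sin ((1 - α) * t + α * (2 * t)) :=
        strictConcaveOn_sin_Icc.2 ⟨ht0.le, by linarith⟩ ⟨by linarith, by linarith⟩ (by linarith)
          (by linarith) hα0 (by ring)
    _ = sin ((1 + α) * t) := by ring_nf

noncomputable def critNormSq (α t : ℝ) : ℝ :=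
  ((2 * cos t) ^ α) ^ 2 - 2 * (2 * cos t) ^ α * cos (α * t) + 1

lemma critNormSq_neg (α t : ℝ) : critNormSq α (-t) = critNormSq α t := by
  simp only [critNormSq, cos_neg, mul_neg]

lemma critNormSq_zero (α : ℝ) : critNormSq α 0 = (2 ^ α - 1) ^ 2 := by
  simp only [critNormSq, cos_zero, mul_zero, mul_one]; ring

lemma critNormSq_pi_div_two {α : ℝ} (hα : α ≠ 0) : critNormSq α (π / 2) = 1 := by
  simp [critNormSq, zero_rpow hα]

lemma continuous_critNormSq {α : ℝ} (hα : 0 ≤ α) : Continuous (critNormSq α) := by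
  have : Continuous fun t => (2 * cos t) ^ α := by fun_prop (disch := exact fun _ => Or.inr hα)
  unfold critNormSq
  fun_prop

lemma hasDerivAt_critNormSq (α : ℝ) {t : ℝ} (ht : cos t ≠ 0) :
    HasDerivAt (critNormSq α)
      (4 * α * (2 * cos t) ^ (α - 1) * (sin ((1 + α) * t) - sin t * (2 * cos t) ^ α)) t := by
  have hbase : 2 * cos t ≠ 0 := mul_ne_zero two_ne_zero ht
  have hpow : HasDerivAt (fun t => (2 * cos t) ^ α) (2 * -sin t * α * (2 * cos t) ^ (α - 1)) t :=
    ((hasDerivAt_cos t).const_mul 2).rpow_const (Or.inl hbase)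
  have hcos : HasDerivAt (fun t => cos (α * t)) (-sin (α * t) * α) t := by
    simpa using ((hasDerivAt_id t).const_mul α).cos
  refine (((hpow.pow 2).sub ((hpow.const_mul 2).mul hcos)).add_const 1).congr_deriv ?_
  rw [show (1 + α) * t = t + α * t by ring, sin_add,
    show (2 * cos t) ^ α = (2 * cos t) ^ (α - 1) * (2 * cos t) by
      rw [← rpow_add_one hbase]; ring_nf]
  ring

lemma strictMonoOn_critNormSq {α : ℝ} (hα0 : 0 < α) (hα1 : α < 1) :
    StrictMonoOn (critNormSq α) (Set.Icc 0 (π / 2)) := by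
  refine strictMonoOn_of_deriv_pos (convex_Icc _ _) (continuous_critNormSq hα0.le).continuousOn ?_
  intro t ht
  rw [interior_Icc] at ht
  obtain ⟨ht0, ht⟩ := ht
  have hcos : 0 < cos t := cos_pos_of_mem_Ioo ⟨by linarith, ht⟩
  rw [(hasDerivAt_critNormSq α hcos.ne').deriv]
  have hpow : 0 < (2 * cos t) ^ (α - 1) := by positivity
  have hgap : 0 < sin ((1 + α) * t) - sin t * (2 * cos t) ^ α :=
    sub_pos.2 (sin_mul_two_cos_rpow_lt_sin_one_add_mul hα0 hα1 ht0 ht)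
  positivity

lemma critNormSq_abs (α t : ℝ) : critNormSq α |t| = critNormSq α t := by
  rcases abs_choice t with h | h <;> rw [h]
  exact critNormSq_neg α t

lemma critNormSq_zero_lt {α t : ℝ} (hα0 : 0 < α) (hα1 : α < 1) (ht0 : t ≠ 0)
    (ht : |t| ≤ π / 2) : critNormSq α 0 < critNormSq α t := by
  rw [← critNormSq_abs α t]
  exact strictMonoOn_critNormSq hα0 hα1 ⟨le_rfl, by positivity⟩ ⟨abs_nonneg t, ht⟩ (abs_pos.2 ht0)

lemma critNormSq_lt_one {α t : ℝ} (hα0 : 0 < α) (hα1 : α < 1) (ht : |t| < π / 2) :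
    critNormSq α t < 1 := by
  rw [← critNormSq_abs α t, ← critNormSq_pi_div_two hα0.ne']
  exact strictMonoOn_critNormSq hα0 hα1 ⟨abs_nonneg t, ht.le⟩ ⟨by positivity, le_rfl⟩ ht

namespace Complex

lemma normSq_one_sub_ofReal_mul_exp_mul_I (R s : ℝ) :
    normSq (1 - R * exp (s * I)) = R ^ 2 - 2 * R * Real.cos s + 1 := by
  rw [normSq_apply]
  simp only [sub_re, sub_im, one_re, one_im, re_ofReal_mul, im_ofReal_mul, exp_ofReal_mul_I_re,
    exp_ofReal_mul_I_im]
  linear_combination R ^ 2 * Real.sin_sq_add_cos_sq s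

lemma ofReal_mul_exp_mul_I_cpow {r t : ℝ} (α : ℝ) (hr : 0 < r) (ht : t ∈ Set.Ioc (-π) π) :
    ((r : ℂ) * exp (t * I)) ^ (α : ℂ) = ((r ^ α : ℝ) : ℂ) * exp ((α * t : ℝ) * I) := by
  have hpolar : (r : ℂ) * exp (t * I) = exp (Real.log r + t * I) := by
    rw [exp_add, ← ofReal_exp, Real.exp_log hr]
  rw [hpolar, cpow_def_of_ne_zero (exp_ne_zero _),
    log_exp (by simpa using ht.1) (by simpa using ht.2), rpow_def_of_pos hr, ofReal_exp,
    ← exp_add]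
  push_cast
  ring_nf

lemma one_sub_exp_neg_mul_I (θ : ℝ) :
    1 - exp (-θ * I) = (2 * Real.cos ((π - θ) / 2) : ℝ) * exp (((π - θ) / 2 : ℝ) * I) := by
  set t : ℂ := (((π - θ) / 2 : ℝ) : ℂ)
  rw [ofReal_mul, ofReal_cos, ofReal_ofNat, two_cos, add_mul, ← exp_add, ← exp_add,
    show t * I + t * I = π * I + -θ * I by simp only [t]; push_cast; ring, exp_add, exp_pi_mul_I,
    neg_mul t, neg_add_cancel, exp_zero]
  ring

lemma injOn_exp_neg_mul_I : Set.InjOn (fun θ : ℝ => exp (-θ * I)) (Set.Ico 0 (2 * π)) := by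
  intro a ha b hb hab
  have hexp : Circle.exp (-a) = Circle.exp (-b) := by
    ext
    simpa only [Circle.coe_exp, ofReal_neg] using hab
  have := Circle.exp_injOn_Ioc (a := -(2 * π)) (b := 0) (by linarith)
    ⟨by linarith [ha.2], by linarith [ha.1]⟩ ⟨by linarith [hb.2], by linarith [hb.1]⟩ hexp
  linarith

lemma cpow_ofReal_injective {α : ℝ} (hα0 : 0 < α) (hα1 : α ≤ 1) :
    Function.Injective fun w : ℂ => w ^ (α : ℂ) := by
  refine Function.LeftInverse.injective (g := fun w => w ^ (α⁻¹ : ℂ)) fun w => ?_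
  show (w ^ (α : ℂ)) ^ (α : ℂ)⁻¹ = w
  -- `α * arg w` stays in `(-π, π]`, so the exponents may be multiplied
  have him : (log w * α).im = arg w * α := by simp [log_im]
  have hlo := neg_pi_lt_arg w
  have hhi := arg_le_pi w
  rw [← cpow_mul _ (by rw [him]; nlinarith [pi_pos]) (by rw [him]; nlinarith [pi_pos]),
    mul_inv_cancel₀ (ofReal_ne_zero.2 hα0.ne'), cpow_one]

end Complex

open Complex in
noncomputable def critArg (α θ : ℝ) : ℂ := 1 - (1 - exp (-(θ : ℂ) * I)) ^ (α : ℂ)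

section critArg

open Complex

variable {α θ : ℝ}

lemma critArg_zero (hα : α ≠ 0) : critArg α 0 = 1 := by
  simp [critArg, hα]

lemma critArg_pi : critArg α π = ((1 - 2 ^ α : ℝ) : ℂ) := by
  have h2 : 1 - exp (-(π : ℂ) * I) = ((2 : ℝ) : ℂ) := by
    rw [neg_mul, Complex.exp_neg, exp_pi_mul_I]; norm_num
  rw [critArg, h2, ← ofReal_cpow zero_le_two]
  push_cast; rfl

lemma injOn_critArg (hα0 : 0 < α) (hα1 : α ≤ 1) : Set.InjOn (critArg α) (Set.Ico 0 (2 * π)) :=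
  (sub_right_injective.comp ((cpow_ofReal_injective hα0 hα1).comp sub_right_injective)).comp_injOn
    injOn_exp_neg_mul_I

lemma sq_norm_critArg (hθ : θ ∈ Set.Ioo 0 (2 * π)) :
    ‖critArg α θ‖ ^ 2 = critNormSq α ((π - θ) / 2) := by
  have hcos : 0 < Real.cos ((π - θ) / 2) :=
    Real.cos_pos_of_mem_Ioo ⟨by linarith [hθ.2], by linarith [hθ.1]⟩
  rw [critArg, one_sub_exp_neg_mul_I, ofReal_mul_exp_mul_I_cpow α (by positivity)
    ⟨by linarith [hθ.2, pi_pos], by linarith [hθ.1, pi_pos]⟩, Complex.sq_norm,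
    normSq_one_sub_ofReal_mul_exp_mul_I, critNormSq]

lemma two_rpow_sub_one_lt_norm_critArg (hα0 : 0 < α) (hα1 : α < 1) (hθ : θ ∈ Set.Ioo 0 (2 * π))
    (hπ : θ ≠ π) : (2 : ℝ) ^ α - 1 < ‖critArg α θ‖ := by
  have h1 : 0 ≤ (2 : ℝ) ^ α - 1 := by linarith [Real.one_le_rpow one_le_two hα0.le]
  rw [← sq_lt_sq₀ h1 (norm_nonneg _), sq_norm_critArg hθ, ← critNormSq_zero]
  exact critNormSq_zero_lt hα0 hα1 (by contrapose! hπ; linarith)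
    (abs_le.2 ⟨by linarith [hθ.2], by linarith [hθ.1]⟩)

lemma norm_critArg_lt_one (hα0 : 0 < α) (hα1 : α < 1) (hθ : θ ∈ Set.Ioo 0 (2 * π)) :
    ‖critArg α θ‖ < 1 := by
  rw [← sq_lt_one_iff₀ (norm_nonneg _), sq_norm_critArg hθ]
  exact critNormSq_lt_one hα0 hα1 (abs_lt.2 ⟨by linarith [hθ.2], by linarith [hθ.1]⟩)

lemma norm_critArg_pi (hα : 0 ≤ α) : ‖critArg α π‖ = (2 : ℝ) ^ α - 1 := by
  rw [critArg_pi, norm_real, Real.norm_eq_abs, abs_sub_comm,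
    abs_of_nonneg (by linarith [Real.one_le_rpow one_le_two hα])]

lemma arg_critArg_pi (hα : 0 < α) : arg (critArg α π) = π := by
  rw [critArg_pi, arg_ofReal_of_neg (by linarith [Real.one_lt_rpow one_lt_two hα])]

lemma two_rpow_sub_one_le_norm_critArg (hα0 : 0 < α) (hα1 : α < 1)
    (hθ : θ ∈ Set.Ioo 0 (2 * π)) : (2 : ℝ) ^ α - 1 ≤ ‖critArg α θ‖ := by
  rcases eq_or_ne θ π with rfl | hπ
  · exact (norm_critArg_pi hα0.le).ge
  · exact (two_rpow_sub_one_lt_norm_critArg hα0 hα1 hθ hπ).le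

lemma norm_critArg_eq_iff (hα0 : 0 < α) (hα1 : α < 1) (hθ : θ ∈ Set.Ioo 0 (2 * π)) :
    ‖critArg α θ‖ = (2 : ℝ) ^ α - 1 ↔ θ = π := by
  refine ⟨fun h => ?_, fun h => h ▸ norm_critArg_pi hα0.le⟩
  by_contra hπ
  exact (two_rpow_sub_one_lt_norm_critArg hα0 hα1 hθ hπ).ne' h

lemma critArg_ne_zero (hα0 : 0 < α) (hα1 : α < 1) (hθ : θ ∈ Set.Ico 0 (2 * π)) :
    critArg α θ ≠ 0 := by
  rcases hθ.1.eq_or_lt with rfl | hθ0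
  · simp [critArg_zero hα0.ne']
  · rw [← norm_pos_iff]
    exact lt_of_lt_of_le (by linarith [Real.one_lt_rpow one_lt_two hα0])
      (two_rpow_sub_one_le_norm_critArg hα0 hα1 ⟨hθ0, hθ.2⟩)

end critArg

theorem stmt2 (α : ℝ) (hα : α ∈ Set.Ioo (0 : ℝ) 1) :
    let h : ℝ → ℂ := fun θ =>
      -Complex.log (1 - (1 - Complex.exp (-(θ : ℂ) * Complex.I)) ^ (α : ℂ))
    Set.InjOn h (Set.Ico 0 (2 * π)) ∧
    ∀ θ ∈ Set.Ico (0 : ℝ) (2 * π),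
      0 ≤ (h θ).re ∧ (h θ).re ≤ -Real.log ((2 : ℝ) ^ α - 1) ∧
      ((h θ).re = 0 ↔ θ = 0) ∧ (θ = 0 → h θ = 0) ∧
      ((h θ).re = -Real.log ((2 : ℝ) ^ α - 1) ↔ θ = π) ∧
      (θ = π → |(h θ).im| = π) := by
  obtain ⟨hα0, hα1⟩ := hα
  intro h
  have hh : ∀ θ, h θ = -Complex.log (critArg α θ) := fun _ => rfl
  have hc : 0 < (2 : ℝ) ^ α - 1 := by linarith [Real.one_lt_rpow one_lt_two hα0]
  have hc1 : (2 : ℝ) ^ α - 1 < 1 := by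
    linarith [Real.rpow_lt_rpow_of_exponent_lt one_lt_two hα1, Real.rpow_one 2]
  refine ⟨fun a ha b hb hab => injOn_critArg hα0 hα1.le ha hb ?_, fun θ hθ => ?_⟩
  · rw [hh, hh, neg_inj] at hab
    rw [← Complex.exp_log (critArg_ne_zero hα0 hα1 ha),
      ← Complex.exp_log (critArg_ne_zero hα0 hα1 hb), hab]
  rcases hθ.1.eq_or_lt with rfl | hθ0
  · have h0 : h 0 = 0 := by rw [hh, critArg_zero hα0.ne', Complex.log_one, neg_zero]
    simp only [h0, Complex.zero_re, le_refl, imp_self, true_and]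
    have hlogc : 0 < -Real.log ((2 : ℝ) ^ α - 1) := neg_pos.2 (Real.log_neg hc hc1)
    exact ⟨hlogc.le, iff_of_false hlogc.ne pi_ne_zero.symm, fun h => absurd h.symm pi_ne_zero⟩
  have hθ' : θ ∈ Set.Ioo 0 (2 * π) := ⟨hθ0, hθ.2⟩
  have hlo := two_rpow_sub_one_le_norm_critArg hα0 hα1 hθ'
  have hhi := norm_critArg_lt_one hα0 hα1 hθ'
  have hpos : 0 < ‖critArg α θ‖ := hc.trans_le hlo
  simp only [hh, Complex.neg_re, Complex.log_re]
  refine ⟨neg_nonneg.2 (Real.log_nonpos hpos.le hhi.le), neg_le_neg (Real.log_le_log hc hlo),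
    iff_of_false (neg_ne_zero.2 (Real.log_neg hpos hhi).ne) hθ0.ne', fun h0 => absurd h0 hθ0.ne',
    ?_, ?_⟩
  · rw [neg_inj, Real.log_injOn_pos.eq_iff hpos hc, norm_critArg_eq_iff hα0 hα1 hθ']
  · rintro rfl
    rw [Complex.neg_im, Complex.log_im, arg_critArg_pi hα0, abs_neg, abs_of_pos pi_pos]
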